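/- Let ξ be a nonincreasing summable sequence of positive reals and suppose there exist M > 0 and an integer k > 1 with (ξ_{a∞})_{kn} ≤ M ξ_n for all n. Then (ξ_{a∞})_j ≤ (k - 1 + kM) (D_k ξ)_j for all j, where D_k ξ is the k-fold ampliation; in particular ξ_{a∞} = O(D_k ξ). -/

import Mathlib

open scoped BigOperators
open Filter

noncomputable def ainf (f : ℕ → ℝ) (n : ℕ) : ℝ := (1 / (n : ℝ)) * ∑' k : ℕ, f (n + 1 + k)

noncomputable def ces (f : ℕ → ℝ) (n : ℕ) : ℝ := (1 / (n : ℝ)) * ∑ j ∈ Finset.Icc 1 n, f j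

noncomputable def ampl (m : ℕ) (f : ℕ → ℝ) (j : ℕ) : ℝ := f ((j + m - 1) / m)

/-!
Put `n = ⌈j / k⌉`, so that `(D_k ξ)_j = ξ_n` and `j ≤ kn < j + k`. Split the tail `∑_{i > j} ξ_i`
at `kn`: the fewer than `k` terms with `j < i ≤ kn` are each at most `ξ_n` by monotonicity, and the
rest is `kn · (ξ_{a∞})_{kn} ≤ kn · M ξ_n`. Dividing by `j` and using `kn - j ≤ (k - 1) j`, `kn ≤ kj`
gives the bound.
-/

theorem natCast_mul_ainf (f : ℕ → ℝ) {n : ℕ} (hn : n ≠ 0) :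
    (n : ℝ) * ainf f n = ∑' i, f (n + 1 + i) := by
  rw [ainf, ← mul_assoc, mul_one_div_cancel (Nat.cast_ne_zero.2 hn), one_mul]

theorem tsum_add_eq_sum_range_add_tsum {f : ℕ → ℝ} (hf : Summable f) {j K : ℕ} (hjK : j ≤ K) :
    ∑' i, f (j + 1 + i) = ∑ i ∈ Finset.range (K - j), f (j + 1 + i) + ∑' i, f (K + 1 + i) := by
  have hshift : Summable fun i ↦ f (j + 1 + i) :=
    (summable_nat_add_iff (j + 1)).2 hf |>.congr fun i ↦ by rw [add_comm]
  rw [← hshift.sum_add_tsum_nat_add (K - j)]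
  congr 1
  exact tsum_congr fun i ↦ congrArg f (by omega)

theorem natCast_mul_ainf_le {f : ℕ → ℝ} (hf : Summable f) {j K : ℕ} {c : ℝ} (hj : j ≠ 0)
    (hjK : j ≤ K) (hc : ∀ i, j < i → i ≤ K → f i ≤ c) :
    (j : ℝ) * ainf f j ≤ ((K : ℝ) - j) * c + K * ainf f K := by
  rw [natCast_mul_ainf f hj, natCast_mul_ainf f (by omega), tsum_add_eq_sum_range_add_tsum hf hjK,
    ← Nat.cast_sub hjK]
  gcongr
  calc ∑ i ∈ Finset.range (K - j), f (j + 1 + i)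
      ≤ (Finset.range (K - j)).card • c :=
        Finset.sum_le_card_nsmul _ _ _ fun i hi ↦ hc _ (by omega) (by simp at hi; omega)
    _ = (K - j : ℕ) * c := by simp [nsmul_eq_mul]

theorem Nat.le_mul_add_sub_one_div {k : ℕ} (hk : 0 < k) (j : ℕ) : j ≤ k * ((j + k - 1) / k) :=
  (ceilDiv_le_iff_le_mul hk).1 le_rfl

theorem Nat.one_le_add_sub_one_div {k j : ℕ} (hk : 0 < k) (hj : 1 ≤ j) : 1 ≤ (j + k - 1) / k :=
  (Nat.le_div_iff_mul_le hk).2 (by omega)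

theorem Nat.add_sub_one_div_le_self {k : ℕ} (hk : 0 < k) (j : ℕ) : (j + k - 1) / k ≤ j :=
  (Nat.div_le_iff_le_mul_add_pred hk).2 (by have := Nat.le_mul_of_pos_left j hk; omega)

theorem stmt_12 (ξ : ℕ → ℝ)
    (hmono : ∀ n, 1 ≤ n → ξ (n + 1) ≤ ξ n)
    (hpos : ∀ n, 1 ≤ n → 0 < ξ n)
    (hsum : Summable ξ)
    (M : ℝ) (hM : 0 < M) (k : ℕ) (hk : 1 < k)
    (h : ∀ n, 1 ≤ n → ainf ξ (k * n) ≤ M * ξ n) :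
    ∀ j, 1 ≤ j → ainf ξ j ≤ ((k : ℝ) - 1 + k * M) * ampl k ξ j := by
  intro j hj
  set n := (j + k - 1) / k
  have hn : 1 ≤ n := Nat.one_le_add_sub_one_div (by omega) hj
  have hjK : j ≤ k * n := Nat.le_mul_add_sub_one_div (by omega) j
  have hKj : k * n ≤ j + k - 1 := Nat.mul_div_le _ _
  have hnj : n ≤ j := Nat.add_sub_one_div_le_self (by omega) j
  have hanti := antitoneOn_nat_Ici_of_succ_le hmono
  have hsplit := natCast_mul_ainf_le hsum (c := ξ n) (by omega) hjK
    fun i hi _ ↦ hanti hn (show 1 ≤ i by omega) (by omega)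
  have hξ := hpos n hn
  have hjr : (1 : ℝ) ≤ j := by exact_mod_cast hj
  have hkr : (1 : ℝ) ≤ k := by exact_mod_cast hk.le
  have hKr : ((k * n : ℕ) : ℝ) + 1 ≤ j + k := by exact_mod_cast (by omega : k * n + 1 ≤ j + k)
  refine le_of_mul_le_mul_left ?_ (by positivity : (0 : ℝ) < j)
  calc (j : ℝ) * ainf ξ j ≤ ((k * n : ℕ) - j) * ξ n + (k * n : ℕ) * (M * ξ n) := by
        grw [← h n hn]; exact hsplit
    _ ≤ (k - 1) * j * ξ n + k * j * (M * ξ n) := by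
        gcongr <;> nlinarith
    _ = j * (((k : ℝ) - 1 + k * M) * ampl k ξ j) := by rw [ampl]; ring
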